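/- arXiv:2204.10018 — 6 statements merged into one kernel-verified Lean document; each statement's English description precedes it below -/
import Mathlib

section
/- In a delicate MDP modeled as a SCIM with robust states S_t, delicate states Z_t, actions A_t, and rewards R_t for 0 ≤ t ≤ T (with each variable depending only on variables of the previous timestep, and R_t depending on S_t, Z_t, A_{t−1}), let G' be the edge-subgraph removing the arrows A_{t'} → Z_{t'+1} and S_{t'} → Z_{t'+1} for all t' ≥ 0. Then G' admits no directed path from A_0 to any Z_{t'} with t' ≥ 1, and hence no instrumental control incentive on any delicate state variable. -/
open Relation

/-- Nodes of the delicate `T`-step MDP CID. -/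
inductive DNode : Type
  | S : ℕ → DNode
  | Z : ℕ → DNode
  | A : ℕ → DNode
  | R : ℕ → DNode
  deriving DecidableEq

/-- Edges of the delicate `T`-step MDP CID: `S_t, Z_t, A_t → S_{t+1}`;
`S_t, Z_t, A_t → Z_{t+1}`; `S_t, Z_t → R_t` and `A_t → R_{t+1}` (rewards `R_1 … R_T`);
and information links `S_t, Z_t, R_t → A_t` (decisions `A_0 … A_{T-1}`). -/
def dEdge (T : ℕ) (v w : DNode) : Prop :=
  match v, w with
  | .S t, .S u => u = t + 1 ∧ u ≤ T
  | .Z t, .S u => u = t + 1 ∧ u ≤ T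
  | .A t, .S u => u = t + 1 ∧ u ≤ T
  | .S t, .Z u => u = t + 1 ∧ u ≤ T
  | .Z t, .Z u => u = t + 1 ∧ u ≤ T
  | .A t, .Z u => u = t + 1 ∧ u ≤ T
  | .S t, .R u => u = t ∧ 1 ≤ t ∧ t ≤ T
  | .Z t, .R u => u = t ∧ 1 ≤ t ∧ t ≤ T
  | .A t, .R u => u = t + 1 ∧ u ≤ T
  | .S t, .A u => u = t ∧ t + 1 ≤ T
  | .Z t, .A u => u = t ∧ t + 1 ≤ T
  | .R t, .A u => u = t ∧ t + 1 ≤ T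
  | _, _ => False

/-- The edge-subgraph `G'` removing the arrows `A_{t'} → Z_{t'+1}` and
`S_{t'} → Z_{t'+1}` for all `t'`. -/
def dEdge' (T : ℕ) (v w : DNode) : Prop :=
  dEdge T v w ∧
    (match v, w with
      | .A _, .Z _ => False
      | .S _, .Z _ => False
      | _, _ => True)

def DNode.IsZ : DNode → Prop
  | .Z _ => True
  | _ => False

lemma DNode.isZ_of_dEdge' {T : ℕ} {v w : DNode} (h : dEdge' T v w) (hw : w.IsZ) : v.IsZ := by
  cases v <;> cases w <;> simp_all [dEdge', dEdge, DNode.IsZ]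

lemma DNode.isZ_of_transGen_dEdge' {T : ℕ} {v w : DNode} (h : TransGen (dEdge' T) v w)
    (hw : w.IsZ) : v.IsZ :=
  h.closed' (fun hab => DNode.isZ_of_dEdge' hab) hw

/-- In the delicate MDP CID, the subgraph `G'` removing the arrows
`A_{t'} → Z_{t'+1}` and `S_{t'} → Z_{t'+1}` admits no directed path from `A_0` to any
`Z_{t'}` with `t' ≥ 1`, and hence (by the graphical ICI criterion) no directed path
`A_0 → Z_{t'} → R_s`, i.e. no instrumental control incentive on any delicate state. -/
theorem stmt4 (T : ℕ) : ∀ t' : ℕ, 1 ≤ t' →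
    (¬ TransGen (dEdge' T) (DNode.A 0) (DNode.Z t')) ∧
    (∀ s : ℕ, ¬ (TransGen (dEdge' T) (DNode.A 0) (DNode.Z t') ∧
        TransGen (dEdge' T) (DNode.Z t') (DNode.R s))) := by
  intro t' _
  have hA : ¬ TransGen (dEdge' T) (DNode.A 0) (DNode.Z t') := fun h =>
    DNode.isZ_of_transGen_dEdge' h trivial
  exact ⟨hA, fun _ hs => hA hs.1⟩
end

section
/- With the edge-subgraph G' of a delicate MDP as above (all edges into delicate nodes from A_t and S_t removed for t' ≥ t), the path-specific objective of an action a at A_t — defined as the G'-specific effect of a on the total return 𝒰 relative to a default action ā, with a fixed policy π imputed to future actions — equals 𝒰_{π, Z_{ā}, a}(ε) − 𝒰_{π, ā}(ε), i.e., the return under action a with the delicate-state trajectory set to its counterfactual values under the default action ā, minus a constant (the return under ā) not depending on a. -/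
/-- In a delicate MDP SCIM (decision at `t = 0`, imputed future policy `π`,
default action `ā`), the path-specific objective of an action `a` — the `G'`-specific
effect of `a` on the total return `𝒰 = Σ_{t=1}^T R_t` relative to `ā`, where `G'` removes
all arrows `A_{t'} → Z_{t'+1}` and `S_{t'} → Z_{t'+1}` — equals
`𝒰_{π, Z_{ā}, a}(ε) − 𝒰_{π, ā}(ε)`: the return under `a` with the delicate-state
trajectory set to its counterfactual values under `ā`, minus the (a-independent) return
under `ā`.  Trajectories are encoded as solution families of the structural equations. -/
theorem stmt5 (T : ℕ) (Ω : Type)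
    -- mechanisms: fS t s z a ω = S_{t+1}, fZ t s z a ω = Z_{t+1},
    -- fR t s z a ω = R_t (from S_t, Z_t, A_{t-1}); initial states S0, Z0
    (fS fZ : ℕ → ℝ → ℝ → ℝ → Ω → ℝ)
    (fR : ℕ → ℝ → ℝ → ℝ → Ω → ℝ)
    (S0 Z0 : Ω → ℝ)
    -- imputed future policy: π t s z r
    (π : ℕ → ℝ → ℝ → ℝ → ℝ)
    (a abar : ℝ)
    -- baseline trajectory under default action ā at time 0 and π afterwards
    (Sb Zb Ab Rb : ℕ → Ω → ℝ)
    (hSb0 : ∀ ω, Sb 0 ω = S0 ω) (hZb0 : ∀ ω, Zb 0 ω = Z0 ω)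
    (hAb0 : ∀ ω, Ab 0 ω = abar)
    (hAb : ∀ t ω, Ab (t + 1) ω = π (t + 1) (Sb (t + 1) ω) (Zb (t + 1) ω) (Rb (t + 1) ω))
    (hSb : ∀ t ω, Sb (t + 1) ω = fS t (Sb t ω) (Zb t ω) (Ab t ω) ω)
    (hZb : ∀ t ω, Zb (t + 1) ω = fZ t (Sb t ω) (Zb t ω) (Ab t ω) ω)
    (hRb : ∀ t ω, Rb (t + 1) ω = fR (t + 1) (Sb (t + 1) ω) (Zb (t + 1) ω) (Ab t ω) ω)
    -- Pearl's Definition-P8 modified model under do(A_0 = a): the severed parents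
    -- (A_{t'} and S_{t'} as inputs of Z_{t'+1}) are fed their baseline (ā) values
    (Sw Zw Aw Rw : ℕ → Ω → ℝ)
    (hSw0 : ∀ ω, Sw 0 ω = S0 ω) (hZw0 : ∀ ω, Zw 0 ω = Z0 ω)
    (hAw0 : ∀ ω, Aw 0 ω = a)
    (hAw : ∀ t ω, Aw (t + 1) ω = π (t + 1) (Sw (t + 1) ω) (Zw (t + 1) ω) (Rw (t + 1) ω))
    (hSw : ∀ t ω, Sw (t + 1) ω = fS t (Sw t ω) (Zw t ω) (Aw t ω) ω)
    (hZw : ∀ t ω, Zw (t + 1) ω = fZ t (Sb t ω) (Zw t ω) (Ab t ω) ω)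
    (hRw : ∀ t ω, Rw (t + 1) ω = fR (t + 1) (Sw (t + 1) ω) (Zw (t + 1) ω) (Aw t ω) ω)
    -- nested-response trajectory: action a, but delicate states set to Z_{ā}
    (Sm Zm Am Rm : ℕ → Ω → ℝ)
    (hSm0 : ∀ ω, Sm 0 ω = S0 ω)
    (hZm : ∀ t ω, Zm t ω = Zb t ω)
    (hAm0 : ∀ ω, Am 0 ω = a)
    (hAm : ∀ t ω, Am (t + 1) ω = π (t + 1) (Sm (t + 1) ω) (Zm (t + 1) ω) (Rm (t + 1) ω))
    (hSm : ∀ t ω, Sm (t + 1) ω = fS t (Sm t ω) (Zm t ω) (Am t ω) ω)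
    (hRm : ∀ t ω, Rm (t + 1) ω = fR (t + 1) (Sm (t + 1) ω) (Zm (t + 1) ω) (Am t ω) ω) :
    ∀ ω, (∑ t ∈ Finset.Icc 1 T, Rw t ω) - (∑ t ∈ Finset.Icc 1 T, Rb t ω) =
      (∑ t ∈ Finset.Icc 1 T, Rm t ω) - (∑ t ∈ Finset.Icc 1 T, Rb t ω) := by
  intro ω
  have hZ : ∀ t, Zw t ω = Zb t ω := by
    intro t
    induction t with
    | zero => rw [hZw0, hZb0]
    | succ t ih => rw [hZw, hZb, ih]
  have key : ∀ t, (Sw t ω = Sm t ω ∧ Aw t ω = Am t ω) ∧ Rw (t+1) ω = Rm (t+1) ω := by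
    intro t
    induction t with
    | zero =>
      have hS1 : Sw 1 ω = Sm 1 ω := by
        rw [hSw, hSm, hSw0, hSm0, hAw0, hAm0, hZ, hZm]
      refine ⟨⟨by rw [hSw0, hSm0], by rw [hAw0, hAm0]⟩, ?_⟩
      rw [hRw, hRm, hS1, hZ, hZm, hAw0, hAm0]
    | succ t ih =>
      obtain ⟨⟨hS, hA⟩, hR⟩ := ih
      have hS1 : Sw (t+1) ω = Sm (t+1) ω := by rw [hSw, hSm, hS, hA, hZ, hZm]
      have hA1 : Aw (t+1) ω = Am (t+1) ω := by rw [hAw, hAm, hS1, hZ, hZm, hR]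
      have hS2 : Sw (t+2) ω = Sm (t+2) ω := by rw [hSw, hSm, hS1, hA1, hZ, hZm]
      exact ⟨⟨hS1, hA1⟩, by rw [hRw, hRm, hS2, hZ, hZm, hA1]⟩
  have : ∀ t ∈ Finset.Icc 1 T, Rw t ω = Rm t ω := by
    intro t ht
    obtain ⟨h1, _⟩ := Finset.mem_Icc.mp ht
    obtain ⟨s, rfl⟩ := Nat.exists_eq_add_of_le h1
    rw [Nat.add_comm]; exact (key s).2
  rw [Finset.sum_congr rfl this]
end

section
/- In a delicate MDP with at least two timesteps after the decision, the node S_1 is a recanting witness for the path-specific effect of A_0 on total return along the subgraph G' removing edges into delicate states: A_0 → S_1 is in G, the path S_1 → Z_2 → R_2 is in G but not G', and the path S_1 → S_2 → R_2 is in both G and G'; hence by the recanting-witness criterion the multi-step path-specific objective is not experimentally identifiable. -/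
open Relation

attribute [local instance] Classical.propDecidable

/-! Vertices of the delicate `T`-step MDP CID, encoded as `Fin 4 × Fin (T+1)`:
kind `0` = robust state `S_t`, kind `1` = delicate state `Z_t`, kind `2` = action `A_t`,
kind `3` = reward `R_t`. -/

/-- Edges of the delicate MDP CID (including information links into actions). -/
def e9 (T : ℕ) (v w : Fin 4 × Fin (T + 1)) : Prop :=
  (v.1.val ≤ 2 ∧ w.1.val = 0 ∧ w.2.val = v.2.val + 1) ∨                -- S,Z,A → S'
  (v.1.val ≤ 2 ∧ w.1.val = 1 ∧ w.2.val = v.2.val + 1) ∨                -- S,Z,A → Z'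
  (v.1.val ≤ 1 ∧ w.1.val = 3 ∧ w.2.val = v.2.val ∧ 1 ≤ v.2.val) ∨      -- S_t,Z_t → R_t
  (v.1.val = 2 ∧ w.1.val = 3 ∧ w.2.val = v.2.val + 1) ∨                -- A_t → R_{t+1}
  ((v.1.val = 0 ∨ v.1.val = 1 ∨ v.1.val = 3) ∧ w.1.val = 2 ∧
    w.2.val = v.2.val ∧ v.2.val + 1 ≤ T)                               -- S,Z,R → A_t

/-- The subgraph `G'` removing `A_t → Z_{t+1}` and `S_t → Z_{t+1}`. -/
def e9' (T : ℕ) (v w : Fin 4 × Fin (T + 1)) : Prop :=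
  e9 T v w ∧ ¬ (w.1.val = 1 ∧ (v.1.val = 0 ∨ v.1.val = 2))

/-- A Markovian structural causal model over the DAG `E` on vertex set `V`. -/
structure MSCM (V : Type) [Fintype V] [DecidableEq V] (E : V → V → Prop) where
  Ω : V → Type
  fin : ∀ v, Fintype (Ω v)
  P : ∀ v, Ω v → ℝ
  Ppos : ∀ v ω, 0 ≤ P v ω
  Psum : ∀ v, ((fin v).elems.sum (P v)) = 1
  f : ∀ v : V, (V → ℝ) → Ω v → ℝ
  hpar : ∀ v g g' ω, (∀ p, E p v → g p = g' p) → f v g ω = f v g' ω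
  vals : (V → Option ℝ) → (∀ v, Ω v) → V → ℝ
  hvals : ∀ σ ω v, vals σ ω v = (σ v).getD (f v (vals σ ω) (ω v))

namespace MSCM

variable {V : Type} [Fintype V] [DecidableEq V] {E : V → V → Prop}

noncomputable def jointP (M : MSCM V E) (ω : ∀ v, M.Ω v) : ℝ := ∏ v, M.P v (ω v)

noncomputable def exp (M : MSCM V E) (h : (∀ v, M.Ω v) → ℝ) : ℝ :=
  letI := M.fin; ∑ ω, M.jointP ω * h ω

def doX (X : V) (x : ℝ) : V → Option ℝ := fun v => if v = X then some x else none

noncomputable def intervDist (M : MSCM V E) (σ : V → Option ℝ) (g : V → ℝ) : ℝ :=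
  letI := M.fin; ∑ ω, if M.vals σ ω = g then M.jointP ω else 0

/-- `w` solves Pearl's Definition-P8 modified model along `E'` under `do(X = x)`. -/
def PSESol (M : MSCM V E) (E' : V → V → Prop) (X : V) (x xbar : ℝ)
    (w : (∀ v, M.Ω v) → V → ℝ) : Prop :=
  ∀ ω v, w ω v =
    if v = X then x
    else M.f v
      (fun p => if E p v ∧ ¬ E' p v then M.vals (doX X xbar) ω p else w ω p) (ω v)

end MSCM

/-- A recanting witness `W` for `(X, Y, G, G')`. -/
def RecantingWitness {V : Type} (E E' : V → V → Prop) (X Y : V) : Prop :=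
  ∃ W : V,
    TransGen E X W ∧
    (∃ l : List V, List.Chain E W l ∧ l.getLast? = some Y ∧ ¬ List.Chain E' W l) ∧
    (∃ l : List V, List.Chain E' W l ∧ l.getLast? = some Y)

/-! Let `ε` be a fair sign and set `S₁ = c(A₀) ε`, `Z₂ = S₂ = S₁`, `R₂ = Z₂ S₂`, all other
mechanisms zero, once with `c = id` and once with `c = |·|`. As `|c a| = |c' a|` and `ε` is
symmetric, flipping `ε` whenever `c a ≠ c' a` matches the two models under every
intervention. The `G'`-specific effect of `A₀ = x` against `x̄` feeds `Z₂` the reference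
value `c(x̄) ε` and `S₂` the active value `c(x) ε`, so it equals `c(x̄) (c(x) - c(x̄))`:
`-2` for `c = id` but `0` for `c = |·|` at `x = 1`, `x̄ = -1`. -/

namespace MSCM

variable {V : Type} [Fintype V] [DecidableEq V] {E : V → V → Prop}

theorem sum_jointP (M : MSCM V E) : letI := M.fin; ∑ ω, M.jointP ω = 1 := by
  let := M.fin
  simp only [jointP]
  rw [← Fintype.prod_sum]
  exact Finset.prod_eq_one fun v _ => M.Psum v

theorem exp_const (M : MSCM V E) {h : (∀ v, M.Ω v) → ℝ} {k : ℝ} (hk : ∀ ω, h ω = k) :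
    M.exp h = k := by
  let := M.fin
  simp only [exp, hk, ← Finset.sum_mul, M.sum_jointP, one_mul]

theorem intervDist_eq_of_equiv (M₁ M₂ : MSCM V E) (σ : V → Option ℝ)
    (e : (∀ v, M₁.Ω v) ≃ (∀ v, M₂.Ω v)) (hP : ∀ ω, M₂.jointP (e ω) = M₁.jointP ω)
    (hvals : ∀ ω, M₂.vals σ (e ω) = M₁.vals σ ω) (g : V → ℝ) :
    M₁.intervDist σ g = M₂.intervDist σ g := by
  let := M₁.fin
  let := M₂.fin
  simp only [intervDist]
  exact Fintype.sum_equiv e _ _ fun ω => by rw [hP, hvals]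

end MSCM

namespace DelicateMDP

abbrev Node (T : ℕ) := Fin 4 × Fin (T + 1)

variable (T : ℕ) (hT : 2 ≤ T)

def A0 : Node T := (2, 0)
def S1 : Node T := (0, ⟨1, Nat.lt_succ_of_lt hT⟩)
def Z2 : Node T := (1, ⟨2, Nat.lt_succ_of_le hT⟩)
def S2 : Node T := (0, ⟨2, Nat.lt_succ_of_le hT⟩)
def R2 : Node T := (3, ⟨2, Nat.lt_succ_of_le hT⟩)

theorem e9_A0_S1 : e9 T (A0 T) (S1 T hT) := by simp [e9, A0, S1]

theorem e9_S1_Z2 : e9 T (S1 T hT) (Z2 T hT) := by simp [e9, S1, Z2]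

theorem e9_Z2_R2 : e9 T (Z2 T hT) (R2 T hT) := by simp [e9, Z2, R2]

theorem not_e9'_S1_Z2 : ¬ e9' T (S1 T hT) (Z2 T hT) := by simp [e9', S1, Z2]

theorem e9'_S1_S2 : e9' T (S1 T hT) (S2 T hT) := by simp [e9', e9, S1, S2]

theorem e9'_S2_R2 : e9' T (S2 T hT) (R2 T hT) := by simp [e9', e9, S2, R2]

def boolSign (b : Bool) : ℝ := if b then 1 else -1

theorem boolSign_mul_self (b : Bool) : boolSign b * boolSign b = 1 := by
  cases b <;> norm_num [boolSign]

theorem boolSign_not (b : Bool) : boolSign (!b) = -boolSign b := by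
  cases b <;> simp [boolSign]

noncomputable def mechanism (c : ℝ → ℝ) (v : Node T) (g : Node T → ℝ) (b : Bool) : ℝ :=
  if v = S1 T hT then c (g (A0 T)) * boolSign b
  else if v = Z2 T hT ∨ v = S2 T hT then g (S1 T hT)
  else if v = R2 T hT then g (Z2 T hT) * g (S2 T hT)
  else 0

noncomputable def solution (c : ℝ → ℝ) (σ : Node T → Option ℝ) (ω : Node T → Bool)
    (v : Node T) : ℝ :=
  let s1 := (σ (S1 T hT)).getD (c ((σ (A0 T)).getD 0) * boolSign (ω (S1 T hT)))
  (σ v).getD <|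
    if v = S1 T hT then c ((σ (A0 T)).getD 0) * boolSign (ω (S1 T hT))
    else if v = Z2 T hT ∨ v = S2 T hT then s1
    else if v = R2 T hT then (σ (Z2 T hT)).getD s1 * (σ (S2 T hT)).getD s1
    else 0

theorem mechanism_congr (c : ℝ → ℝ) (v : Node T) (g g' : Node T → ℝ) (b : Bool)
    (h : ∀ p, e9 T p v → g p = g' p) : mechanism T hT c v g b = mechanism T hT c v g' b := by
  unfold mechanism
  split_ifs with hS1 hZ2S2 hR2
  · subst hS1
    rw [h _ (e9_A0_S1 T hT)]
  · rcases hZ2S2 with rfl | rfl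
    · rw [h _ (e9_S1_Z2 T hT)]
    · rw [h _ (e9'_S1_S2 T hT).1]
  · subst hR2
    rw [h _ (e9_Z2_R2 T hT), h _ (e9'_S2_R2 T hT).1]
  · rfl

theorem solution_eq_mechanism (c : ℝ → ℝ) (σ : Node T → Option ℝ) (ω : Node T → Bool)
    (v : Node T) :
    solution T hT c σ ω v = (σ v).getD (mechanism T hT c v (solution T hT c σ ω) (ω v)) := by
  unfold mechanism
  split_ifs with hS1 hZ2S2 hR2
  · simp [solution, hS1, A0, S1, Z2, S2, R2]
  · rcases hZ2S2 with rfl | rfl <;> simp [solution, A0, S1, Z2, S2]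
  · simp [solution, hR2, A0, S1, Z2, S2, R2]
  · simp [solution, hS1, hZ2S2, hR2]

noncomputable def model (c : ℝ → ℝ) : MSCM (Node T) (e9 T) where
  Ω _ := Bool
  fin _ := inferInstance
  P _ _ := 1 / 2
  Ppos _ _ := by norm_num
  Psum _ := by
    show ∑ _b : Bool, (1 : ℝ) / 2 = 1
    norm_num
  f := mechanism T hT c
  hpar v g g' b h := mechanism_congr T hT c v g g' b h
  vals := solution T hT c
  hvals := solution_eq_mechanism T hT c

noncomputable def pathSolution (c : ℝ → ℝ) (x xbar : ℝ) (ω : Node T → Bool) (v : Node T) :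
    ℝ :=
  if v = A0 T then x
  else if v = S1 T hT ∨ v = S2 T hT then c x * boolSign (ω (S1 T hT))
  else if v = Z2 T hT then c xbar * boolSign (ω (S1 T hT))
  else if v = R2 T hT then c xbar * boolSign (ω (S1 T hT)) * (c x * boolSign (ω (S1 T hT)))
  else 0

theorem pseSol_pathSolution (c : ℝ → ℝ) (x xbar : ℝ) :
    (model T hT c).PSESol (e9' T) (A0 T) x xbar (pathSolution T hT c x xbar) := by
  intro ω v
  change Node T → Bool at ω
  dsimp only [model]
  unfold mechanism
  split_ifs with hA0 hS1 hZ2S2 hR2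
  · simp [pathSolution, hA0]
  · simp [pathSolution, hS1, A0, S1, S2, e9', e9]
  · rcases hZ2S2 with rfl | rfl <;>
      simp [pathSolution, solution, MSCM.doX, A0, S1, Z2, S2, e9', e9]
  · simp [pathSolution, hR2, A0, S1, Z2, S2, R2, e9', e9]
  · simp [pathSolution, hA0, hS1, hR2, not_or.mp hZ2S2]

def flipS1 (b : Bool) (ω : Node T → Bool) : Node T → Bool :=
  if b then Function.update ω (S1 T hT) (!ω (S1 T hT)) else ω

theorem flipS1_involutive (b : Bool) : Function.Involutive (flipS1 T hT b) := by
  intro ω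
  cases b <;> simp [flipS1]

theorem solution_flipS1 (c c' : ℝ → ℝ) (hc : ∀ a, |c a| = |c' a|) (σ : Node T → Option ℝ)
    (ω : Node T → Bool) :
    solution T hT c' σ
        (flipS1 T hT (decide (c ((σ (A0 T)).getD 0) ≠ c' ((σ (A0 T)).getD 0))) ω) =
      solution T hT c σ ω := by
  have hS1 : ∀ a, c' a * boolSign (flipS1 T hT (decide (c a ≠ c' a)) ω (S1 T hT)) =
      c a * boolSign (ω (S1 T hT)) := by
    intro a
    by_cases h : c a = c' a
    · simp [flipS1, h]
    · have h' : c a = -c' a := (abs_eq_abs.mp (hc a)).resolve_left h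
      rw [flipS1, if_pos (decide_eq_true h), Function.update_self, boolSign_not, h', neg_mul,
        mul_neg]
  funext v
  simp only [solution, hS1]

theorem intervDist_model_eq (c c' : ℝ → ℝ) (hc : ∀ a, |c a| = |c' a|)
    (σ : Node T → Option ℝ) (g : Node T → ℝ) :
    (model T hT c).intervDist σ g = (model T hT c').intervDist σ g :=
  MSCM.intervDist_eq_of_equiv _ _ σ (flipS1_involutive T hT _).toPerm (fun _ => rfl)
    (solution_flipS1 T hT c c' hc σ) g

def totalReturn (F : Node T → ℝ) : ℝ :=
  ∑ t : Fin (T + 1), if 1 ≤ t.val then F (3, t) else 0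

theorem totalReturn_eq_apply_R2 (F : Node T → ℝ)
    (hF : ∀ t : Fin (T + 1), t.val ≠ 2 → F (3, t) = 0) :
    totalReturn T F = F (R2 T hT) := by
  rw [totalReturn, Finset.sum_eq_single_of_mem ⟨2, by omega⟩ (Finset.mem_univ _)]
  · rfl
  · intro t _ ht
    simp [hF t fun h => ht (Fin.ext h)]

theorem pathEffect_model (c : ℝ → ℝ) (x xbar : ℝ) :
    (model T hT c).exp (fun ω => totalReturn T (pathSolution T hT c x xbar ω) -
      totalReturn T ((model T hT c).vals (MSCM.doX (A0 T) xbar) ω)) =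
      c xbar * (c x - c xbar) := by
  refine MSCM.exp_const _ fun ω => ?_
  change Node T → Bool at ω
  have hR2 : ∀ t : Fin (T + 1), t.val ≠ 2 → (3, t) ≠ R2 T hT := fun t ht => by
    simp [R2, Fin.ext_iff, ht]
  rw [totalReturn_eq_apply_R2 T hT _ fun t ht => by
      simp [pathSolution, A0, S1, Z2, S2, hR2 t ht],
    totalReturn_eq_apply_R2 T hT _ fun t ht => by
      simp [model, solution, MSCM.doX, A0, S1, Z2, S2, hR2 t ht]]
  have hs := boolSign_mul_self (ω (S1 T hT))
  simp only [S1] at hs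
  simp [pathSolution, model, solution, MSCM.doX, A0, S1, Z2, S2, R2]
  linear_combination (c xbar * c x - c xbar * c xbar) * hs

end DelicateMDP

/-- in a delicate MDP with `T ≥ 2`, `S_1` is a recanting witness for the
path-specific effect of `A_0` on the return along the subgraph `G'`: `A_0 → S_1` is in
`G`, the path `S_1 → Z_2 → R_2` is in `G` but not in `G'`, and `S_1 → S_2 → R_2` is in
both; hence by the recanting-witness criterion the multi-step path-specific objective
(the `G'`-specific effect of `A_0` on the total return `Σ_{t≥1} R_t`) is not
experimentally identifiable: two Markovian models can agree on all interventional
distributions and disagree on the path-specific effect. -/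
theorem stmt9 (T : ℕ) (hT : 2 ≤ T) :
    -- with `A0 = (2, 0)`, `S1 = (0, 1)`, `Z2 = (1, 2)`, `S2 = (0, 2)`, `R2 = (3, 2)`
    (e9 T ((2 : Fin 4), (0 : Fin (T + 1))) ((0 : Fin 4), (⟨1, by omega⟩ : Fin (T + 1)))) ∧
    (List.Chain (e9 T) ((0 : Fin 4), (⟨1, by omega⟩ : Fin (T + 1)))
        [((1 : Fin 4), (⟨2, by omega⟩ : Fin (T + 1))),
         ((3 : Fin 4), (⟨2, by omega⟩ : Fin (T + 1)))] ∧
      ¬ List.Chain (e9' T) ((0 : Fin 4), (⟨1, by omega⟩ : Fin (T + 1)))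
        [((1 : Fin 4), (⟨2, by omega⟩ : Fin (T + 1))),
         ((3 : Fin 4), (⟨2, by omega⟩ : Fin (T + 1)))]) ∧
    (List.Chain (e9' T) ((0 : Fin 4), (⟨1, by omega⟩ : Fin (T + 1)))
        [((0 : Fin 4), (⟨2, by omega⟩ : Fin (T + 1))),
         ((3 : Fin 4), (⟨2, by omega⟩ : Fin (T + 1)))] ∧
      List.Chain (e9 T) ((0 : Fin 4), (⟨1, by omega⟩ : Fin (T + 1)))
        [((0 : Fin 4), (⟨2, by omega⟩ : Fin (T + 1))),
         ((3 : Fin 4), (⟨2, by omega⟩ : Fin (T + 1)))]) ∧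
    RecantingWitness (e9 T) (e9' T) ((2 : Fin 4), (0 : Fin (T + 1)))
      ((3 : Fin 4), (⟨2, by omega⟩ : Fin (T + 1))) ∧
    -- non-identifiability of the path-specific effect of A_0 on the total return
    (∃ (x xbar : ℝ) (M1 M2 : MSCM (Fin 4 × Fin (T + 1)) (e9 T))
        (w1 : (∀ v, M1.Ω v) → Fin 4 × Fin (T + 1) → ℝ)
        (w2 : (∀ v, M2.Ω v) → Fin 4 × Fin (T + 1) → ℝ),
      x ≠ xbar ∧
      M1.PSESol (e9' T) ((2 : Fin 4), (0 : Fin (T + 1))) x xbar w1 ∧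
      M2.PSESol (e9' T) ((2 : Fin 4), (0 : Fin (T + 1))) x xbar w2 ∧
      (∀ σ g, M1.intervDist σ g = M2.intervDist σ g) ∧
      M1.exp (fun ω =>
          (∑ t : Fin (T + 1), if 1 ≤ t.val then w1 ω ((3 : Fin 4), t) else 0) -
          (∑ t : Fin (T + 1), if 1 ≤ t.val then
            M1.vals (MSCM.doX ((2 : Fin 4), (0 : Fin (T + 1))) xbar) ω ((3 : Fin 4), t)
            else 0)) ≠
      M2.exp (fun ω =>
          (∑ t : Fin (T + 1), if 1 ≤ t.val then w2 ω ((3 : Fin 4), t) else 0) -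
          (∑ t : Fin (T + 1), if 1 ≤ t.val then
            M2.vals (MSCM.doX ((2 : Fin 4), (0 : Fin (T + 1))) xbar) ω ((3 : Fin 4), t)
            else 0))) := by
  open DelicateMDP in
  have hS1Z2R2 : List.IsChain (e9 T) [S1 T hT, Z2 T hT, R2 T hT] :=
    .cons_cons (e9_S1_Z2 T hT) (.cons_cons (e9_Z2_R2 T hT) (.singleton _))
  have hS1S2R2' : List.IsChain (e9' T) [S1 T hT, S2 T hT, R2 T hT] :=
    .cons_cons (e9'_S1_S2 T hT) (.cons_cons (e9'_S2_R2 T hT) (.singleton _))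
  have hS1Z2R2' : ¬ List.IsChain (e9' T) [S1 T hT, Z2 T hT, R2 T hT] := fun h =>
    not_e9'_S1_Z2 T hT (List.isChain_cons_cons.mp h).1
  refine ⟨e9_A0_S1 T hT, ⟨hS1Z2R2, hS1Z2R2'⟩, ⟨hS1S2R2', hS1S2R2'.imp fun _ _ h => h.1⟩,
    ⟨S1 T hT, .single (e9_A0_S1 T hT), ⟨_, hS1Z2R2, rfl, hS1Z2R2'⟩, ⟨_, hS1S2R2', rfl⟩⟩,
    1, -1, model T hT id, model T hT (|·|),
    pathSolution T hT id 1 (-1), pathSolution T hT (|·|) 1 (-1),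
    by norm_num, pseSol_pathSolution T hT id 1 (-1), pseSol_pathSolution T hT (|·|) 1 (-1),
    intervDist_model_eq T hT id (|·|) fun _ => (abs_abs _).symm, fun h => ?_⟩
  have key := (pathEffect_model T hT id 1 (-1)).symm.trans
    (h.trans (pathEffect_model T hT (|·|) 1 (-1)))
  norm_num at key
end

section
/- For a one-timestep delicate decision problem (decision A with children S and Z, both parents of reward R, and no path S → Z or Z → S), the path-specific effect of a on R along the edge-subgraph that deletes A → Z is experimentally identifiable, and equals E[R | do(A = a, Z = z̄)] marginalized over z̄ distributed as Z under do(A = ā). -/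
attribute [local instance] Classical.propDecidable

/-- For a one-timestep delicate decision problem (decision `A` with children
`S` and `Z`, both parents of the reward `R`, no edge between `S` and `Z`, and mutually
independent exogenous noises `ΩS, ΩZ, ΩR`), the expected outcome of the path-specific
effect of `a` on `R` along the subgraph deleting `A → Z` (relative to baseline `ā`) is
experimentally identifiable: it equals `E[R | do(A = a, Z = z̄)]` marginalized over `z̄`
distributed as `Z` under `do(A = ā)`, i.e.
`Σ_{z̄} P(Z = z̄ | do(A = ā)) · E[R | do(A = a, Z = z̄)]`. -/
theorem stmt10 {Act DZ : Type} [Fintype DZ] [DecidableEq DZ]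
    {ΩS ΩZ ΩR : Type} [Fintype ΩS] [Fintype ΩZ] [Fintype ΩR]
    (PS : ΩS → ℝ) (PZ : ΩZ → ℝ) (PR : ΩR → ℝ)
    (hPS0 : ∀ ω, 0 ≤ PS ω) (hPZ0 : ∀ ω, 0 ≤ PZ ω) (hPR0 : ∀ ω, 0 ≤ PR ω)
    (hPS : ∑ ω, PS ω = 1) (hPZ : ∑ ω, PZ ω = 1) (hPR : ∑ ω, PR ω = 1)
    -- structural functions: S = fS a ωS, Z = fZ a ωZ, R = fR s z ωR
    (fS : Act → ΩS → ℝ) (fZ : Act → ΩZ → DZ) (fR : ℝ → DZ → ΩR → ℝ)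
    (a abar : Act) :
    -- expected response of R in the Definition-P8 modified model (edge A → Z deleted,
    -- baseline ā): Z takes its value under do(A = ā), all else under do(A = a)
    (∑ ωs : ΩS, ∑ ωz : ΩZ, ∑ ωr : ΩR,
        PS ωs * PZ ωz * PR ωr * fR (fS a ωs) (fZ abar ωz) ωr) =
      ∑ z : DZ,
        (∑ ωz : ΩZ, if fZ abar ωz = z then PZ ωz else 0) *
          (∑ ωs : ΩS, ∑ ωr : ΩR, PS ωs * PR ωr * fR (fS a ωs) z ωr) := by
  have : ∀ z : DZ,
      (∑ ωz : ΩZ, if fZ abar ωz = z then PZ ωz else 0) *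
        (∑ ωs : ΩS, ∑ ωr : ΩR, PS ωs * PR ωr * fR (fS a ωs) z ωr)
      = ∑ ωz : ΩZ, if fZ abar ωz = z then
          PZ ωz * ∑ ωs : ΩS, ∑ ωr : ΩR, PS ωs * PR ωr * fR (fS a ωs) z ωr else 0 := by
    intro z
    rw [Finset.sum_mul]
    refine Finset.sum_congr rfl fun ωz _ => by split <;> simp
  calc (∑ ωs : ΩS, ∑ ωz : ΩZ, ∑ ωr : ΩR,
        PS ωs * PZ ωz * PR ωr * fR (fS a ωs) (fZ abar ωz) ωr)
      = ∑ ωz : ΩZ, PZ ωz * ∑ ωs : ΩS, ∑ ωr : ΩR,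
          PS ωs * PR ωr * fR (fS a ωs) (fZ abar ωz) ωr := by
        rw [Finset.sum_comm]
        refine Finset.sum_congr rfl fun ωz _ => ?_
        simp only [Finset.mul_sum]
        refine Finset.sum_congr rfl fun ωs _ => Finset.sum_congr rfl fun ωr _ => by ring
    _ = ∑ ωz : ΩZ, ∑ z : DZ, (if fZ abar ωz = z then
          PZ ωz * ∑ ωs : ΩS, ∑ ωr : ΩR, PS ωs * PR ωr * fR (fS a ωs) z ωr else 0) := by
        refine Finset.sum_congr rfl fun ωz _ => ?_
        rw [Finset.sum_ite_eq Finset.univ (fZ abar ωz)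
          (fun z => PZ ωz * ∑ ωs : ΩS, ∑ ωr : ΩR, PS ωs * PR ωr * fR (fS a ωs) z ωr)]
        simp
    _ = _ := by
        rw [Finset.sum_comm]
        exact Finset.sum_congr rfl fun z _ => (this z).symm
end

section
/- In the 'barging' environment, the unique optimal policy with respect to the expected return is to barge (B) when the person is on the path and then take the short path (S), achieving return 10; whereas the unique optimal deterministic policy with respect to the fixed-state path-specific objective (with intervention do(position = path)) takes the long path (L) immediately from the state where the person is on the path, achieving return 1. -/
/-- Position of the person: the delicate state of the barging environment. -/
inductive BPos : Type
  | path : BPos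
  | river : BPos
  deriving DecidableEq

/-- Actions: long path, short path, barge. -/
inductive BAct : Type
  | L : BAct
  | S : BAct
  | B : BAct
  deriving DecidableEq

/-- One environment step: `step z a = (z', reward, done)`. -/
def bStep : BPos → BAct → BPos × ℝ × Bool
  | z, .L => (z, 1, true)
  | .river, .S => (.river, 10, true)
  | .path, .S => (.path, 0, false)
  | .path, .B => (.river, 0, false)
  | .river, .B => (.river, 0, false)

/-- `n`-step return of the (stationary, deterministic) policy `π` from state `z`. -/
def bRet : ℕ → BPos → (BPos → BAct) → ℝ
  | 0, _, _ => 0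
  | n + 1, z, π =>
    (bStep z (π z)).2.1 + if (bStep z (π z)).2.2 then 0 else bRet n (bStep z (π z)).1 π

/-- `n`-step return in the fixed-state modified model `do(Z = z)`: the delicate state is
held at its baseline value `z` along all `Z`-mediated paths (the agent's actions cannot
change `Z` for the purpose of evaluating reward). -/
def bFRet : ℕ → BPos → (BPos → BAct) → ℝ
  | 0, _, _ => 0
  | n + 1, z, π =>
    (bStep z (π z)).2.1 + if (bStep z (π z)).2.2 then 0 else bFRet n z π

/-- In the barging environment (episodes start with the person on the path,
horizon 2), the unique optimal policy for the expected return barges and then takes the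
short path, achieving return 10; whereas the unique optimal deterministic policy for the
fixed-state path-specific objective with intervention `do(position = path)` takes the long
path immediately, achieving return 1. -/
theorem stmt11 :
    (∀ π : BPos → BAct, bRet 2 .path π ≤ 10) ∧
    (∀ π : BPos → BAct, bRet 2 .path π = 10 ↔ (π .path = .B ∧ π .river = .S)) ∧
    (∀ π : BPos → BAct, bFRet 2 .path π ≤ 1) ∧
    (∀ π : BPos → BAct, bFRet 2 .path π = 1 ↔ π .path = .L) := by
  refine ⟨?_, ?_, ?_, ?_⟩ <;> intro π <;>
    rcases hp : π .path <;> rcases hr : π .river <;>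
    simp [bRet, bFRet, bStep, hp, hr]
end

section
/- If a single-decision CID G contains a directed path from A through X to some utility node, then there exists a SCIM compatible with G and an action a such that E[𝒰_{X_a}] ≠ E[𝒰] for the optimal policy; i.e., the graphical criterion is complete: such a CID admits an instrumental control incentive on X. -/
open Relation

/-- Expected total utility of a value assignment, with an explicit `Fintype` instance. -/
def expUtil {V D Ω : Type} (iΩ : Fintype Ω) (P : Ω → ℝ) (U : Finset V)
    (util : V → D → ℝ) (val : V → Ω → D) : ℝ :=
  ∑ ω ∈ @Finset.univ Ω iΩ, P ω * ∑ u ∈ U, util u (val u ω)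

/-!
Keep only the edges of `E` that lie on a directed path through `X`, and let every node be the
disjunction of its parents along these edges, with no noise. The policy `A := True` switches on
exactly the nodes reachable from `A`, in particular `u`, and so earns the maximal utility `1`.
Under `do(A = False)` every node is off, so the intervention `X := X_a` switches `X` off. By
acyclicity, a kept edge leaving a node that reaches `X` leads either into `X` or to a node that
still reaches `X`; hence every kept path from `A` to `u` passes through `X`, and the utility
drops to `0`.
-/

section Paths

variable {V : Type} {E R : V → V → Prop} {X a v : V}

def onPathThrough (E : V → V → Prop) (X p q : V) : Prop :=
  E p q ∧ (ReflTransGen E q X ∨ ReflTransGen E X p)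

def avoiding (R : V → V → Prop) (X p q : V) : Prop :=
  R p q ∧ q ≠ X

theorem Relation.TransGen.to_onPathThrough (h : TransGen E a X) :
    TransGen (onPathThrough E X) a X := by
  induction h using TransGen.head_induction_on with
  | single h => exact .single ⟨h, .inl .refl⟩
  | head h h' ih => exact .head ⟨h, .inl h'.to_reflTransGen⟩ ih

theorem Relation.ReflTransGen.to_onPathThrough (h : ReflTransGen E X v) :
    ReflTransGen (onPathThrough E X) X v := by
  induction h with
  | refl => exact .refl
  | tail hX hE ih => exact ih.tail ⟨hE, .inr hX⟩

theorem Relation.ReflTransGen.ne_of_avoiding (h : ReflTransGen (avoiding R X) a v) (ha : a ≠ X) :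
    v ≠ X := by
  rcases h.cases_tail with rfl | ⟨_, _, -, hv⟩
  exacts [ha, hv]

theorem Relation.ReflTransGen.reflTransGen_of_avoiding_onPathThrough
    (h : ReflTransGen (avoiding (onPathThrough E X) X) a v)
    (hacyclic : ∀ v w : V, ReflTransGen E v w → ReflTransGen E w v → v = w)
    (haX : ReflTransGen E a X) (ha : a ≠ X) : ReflTransGen E v X := by
  induction h with
  | refl => exact haX
  | @tail b c hab hbc ih =>
    obtain ⟨⟨-, hcX | hXb⟩, -⟩ := hbc
    · exact hcX
    · exact absurd (hacyclic b X ih hXb) (hab.ne_of_avoiding ha)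

theorem reflTransGen_iff_exists_of_ne (hv : v ≠ a) :
    ReflTransGen R a v ↔ ∃ p, R p v ∧ ReflTransGen R a p := by
  rw [ReflTransGen.cases_tail_iff]
  simp only [hv, false_or]
  exact ⟨fun ⟨p, hp, hpv⟩ => ⟨p, hpv, hp⟩, fun ⟨p, hpv, hp⟩ => ⟨p, hp, hpv⟩⟩

theorem reflTransGen_avoiding_iff_exists (hv : v ≠ a) (hvX : v ≠ X) :
    ReflTransGen (avoiding R X) a v ↔ ∃ p, R p v ∧ ReflTransGen (avoiding R X) a p := by
  rw [reflTransGen_iff_exists_of_ne hv]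
  simp only [avoiding, hvX, ne_eq, not_false_eq_true, and_true]

end Paths

open Classical in
theorem expUtil_unit_indicator {V : Type} [DecidableEq V] {U : Finset V} {u : V} (hu : u ∈ U)
    (val : V → Unit → Prop) :
    expUtil inferInstance (fun _ => 1) U (fun w d => if w = u then (if d then 1 else 0) else 0)
      val = if val u () then 1 else 0 := by
  simp only [expUtil, Finset.univ_unique, Finset.sum_singleton, one_mul]
  rw [Finset.sum_ite_eq' U u, if_pos hu]

theorem stmt16_general {V : Type} [DecidableEq V]
    (E : V → V → Prop)
    (hacyclic : ∀ v w : V, ReflTransGen E v w → ReflTransGen E w v → v = w)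
    (A X : V) (U : Finset V) (u : V) (hu : u ∈ U) (hXA : X ≠ A)
    (hpath1 : TransGen E A X) (hpath2 : ReflTransGen E X u) :
    ∃ (D Ω : Type) (iΩ : Fintype Ω)
      (P : Ω → ℝ)
      (f : V → (V → D) → Ω → D)
      (π : (V → D) → D)
      (util : V → D → ℝ)
      (vπ : V → Ω → D) (a : D) (va vX : V → Ω → D),
      (∀ ω, 0 ≤ P ω) ∧ (∑ ω ∈ @Finset.univ Ω iΩ, P ω) = 1 ∧
      -- the structural functions and the policy respect the parent sets of the graph
      (∀ v g g' ω, (∀ p, E p v → g p = g' p) → f v g ω = f v g' ω) ∧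
      (∀ g g', (∀ p, E p A → g p = g' p) → π g = π g') ∧
      -- vπ is the natural solution under the policy π
      (∀ v ω, vπ v ω =
        if v = A then π (fun p => vπ p ω) else f v (fun p => vπ p ω) ω) ∧
      -- the policy π is optimal
      (∀ (π' : (V → D) → D) (vπ' : V → Ω → D),
        (∀ v ω, vπ' v ω =
          if v = A then π' (fun p => vπ' p ω) else f v (fun p => vπ' p ω) ω) →
        expUtil iΩ P U util vπ' ≤ expUtil iΩ P U util vπ) ∧
      -- va solves do(A = a); vX is the nested solution under do(X = X_a) with policy π
      (∀ v ω, va v ω = if v = A then a else f v (fun p => va p ω) ω) ∧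
      (∀ v ω, vX v ω =
        if v = X then va X ω
        else if v = A then π (fun p => vX p ω)
        else f v (fun p => vX p ω) ω) ∧
      -- the instrumental control incentive on X:
      expUtil iΩ P U util vX ≠ expUtil iΩ P U util vπ := by
  classical
  set E' := onPathThrough E X
  have hreach : ReflTransGen E' A u := hpath1.to_onPathThrough.to_reflTransGen.trans
    hpath2.to_onPathThrough
  have hcut : ¬ ReflTransGen (avoiding E' X) A u := fun h =>
    h.ne_of_avoiding hXA.symm <| hacyclic u X
      (h.reflTransGen_of_avoiding_onPathThrough hacyclic hpath1.to_reflTransGen hXA.symm) hpath2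
  refine ⟨Prop, Unit, inferInstance, fun _ => 1, fun v g _ => ∃ p, E' p v ∧ g p,
    fun _ => True, fun w d => if w = u then (if d then 1 else 0) else 0,
    fun v _ => ReflTransGen E' A v, False, fun _ _ => False,
    fun v _ => ReflTransGen (avoiding E' X) A v,
    fun _ => zero_le_one, by simp, ?_, fun _ _ _ => rfl, ?_, ?_, ?_, ?_, ?_⟩
  · intro v g g' _ h
    exact propext (exists_congr fun p => and_congr_right fun hp => by rw [h p hp.1])
  · intro v _
    split_ifs with hv
    · exact propext (iff_true_intro (hv ▸ .refl))
    · exact propext (reflTransGen_iff_exists_of_ne hv)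
  · intro _ _ _
    rw [expUtil_unit_indicator hu, expUtil_unit_indicator hu, if_pos hreach]
    split_ifs <;> norm_num
  · intro v _
    split_ifs <;> simp
  · intro v _
    split_ifs with hvX hvA
    · subst hvX
      exact propext (iff_false_intro fun h => h.ne_of_avoiding hXA.symm rfl)
    · exact propext (iff_true_intro (hvA ▸ .refl))
    · exact propext (reflTransGen_avoiding_iff_exists hvA hvX)
  · rw [expUtil_unit_indicator hu, expUtil_unit_indicator hu, if_pos hreach, if_neg hcut]
    norm_num

/-- completeness of the graphical ICI criterion: if a single-decision CID
contains a directed path from the decision `A` through `X` to some utility node `u`, then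
there exists a compatible SCIM (structural functions respecting the parent sets of the
graph), a policy `π` optimal for it, and an action `a` such that
`E[𝒰_{X_a}] ≠ E[𝒰]` — the CID admits an instrumental control incentive on `X`. -/
theorem stmt16 {V : Type} [Fintype V] [DecidableEq V]
    (E : V → V → Prop)
    (hacyclic : ∀ v w : V, ReflTransGen E v w → ReflTransGen E w v → v = w)
    (A X : V) (U : Finset V) (u : V) (hu : u ∈ U) (hXA : X ≠ A)
    (hpath1 : TransGen E A X) (hpath2 : ReflTransGen E X u) :
    ∃ (D Ω : Type) (iΩ : Fintype Ω)
      (P : Ω → ℝ)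
      (f : V → (V → D) → Ω → D)
      (π : (V → D) → D)
      (util : V → D → ℝ)
      (vπ : V → Ω → D) (a : D) (va vX : V → Ω → D),
      (∀ ω, 0 ≤ P ω) ∧ (∑ ω ∈ @Finset.univ Ω iΩ, P ω) = 1 ∧
      -- the structural functions and the policy respect the parent sets of the graph
      (∀ v g g' ω, (∀ p, E p v → g p = g' p) → f v g ω = f v g' ω) ∧
      (∀ g g', (∀ p, E p A → g p = g' p) → π g = π g') ∧
      -- vπ is the natural solution under the policy π
      (∀ v ω, vπ v ω =
        if v = A then π (fun p => vπ p ω) else f v (fun p => vπ p ω) ω) ∧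
      -- the policy π is optimal
      (∀ (π' : (V → D) → D) (vπ' : V → Ω → D),
        (∀ v ω, vπ' v ω =
          if v = A then π' (fun p => vπ' p ω) else f v (fun p => vπ' p ω) ω) →
        expUtil iΩ P U util vπ' ≤ expUtil iΩ P U util vπ) ∧
      -- va solves do(A = a); vX is the nested solution under do(X = X_a) with policy π
      (∀ v ω, va v ω = if v = A then a else f v (fun p => va p ω) ω) ∧
      (∀ v ω, vX v ω =
        if v = X then va X ω
        else if v = A then π (fun p => vX p ω)
        else f v (fun p => vX p ω) ω) ∧
      -- the instrumental control incentive on X: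
      expUtil iΩ P U util vX ≠ expUtil iΩ P U util vπ :=
  stmt16_general E hacyclic A X U u hu hXA hpath1 hpath2
end
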